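/- Let φ_ε, φ : X × X → ℝ and suppose x̂ maximizes φ_ε(·, x̂) over X, x̄ maximizes φ(·, x̄) over X. If there exist constants γ > 0 and ν ∈ (0,1) such that φ_ε(x, x̂) ≤ φ_ε(x̂, x̂) − γ‖x − x̂‖^ν for all x ∈ X (growth condition), and sup_{x∈X} |φ_ε(x, x̂) − φ(x, x̂)| ≤ δ and |φ(x̂, x̂) − φ(x̄, x̂)| ≤ κ‖x̂ − x̄‖, then γ‖x̂ − x̄‖^ν ≤ 2δ + κ‖x̂ − x̄‖. Consequently, if moreover (γ/2)‖x̂ − x̄‖^ν ≥ κ‖x̂ − x̄‖, then ‖x̂ − x̄‖ ≤ (4δ/γ)^{1/ν}. -/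

import Mathlib

/-! Evaluating the growth condition at `x̄` and replacing `φ_ε` by `φ` at both `x̂` and `x̄`
costs at most `2δ`, while moving from `x̄` back to `x̂` inside `φ(·, x̂)` costs at most
`κ‖x̂ − x̄‖`. If that last term is at most half the growth term, it is absorbed, leaving
`‖x̂ − x̄‖^ν ≤ 4δ/γ`. -/

lemma le_two_mul_add_of_growth {α : Type*} {f g : α → ℝ} {a b : α} {r δ L : ℝ}
    (hgrowth : f b ≤ f a - r) (ha : |f a - g a| ≤ δ) (hb : |f b - g b| ≤ δ)
    (hlip : |g a - g b| ≤ L) : r ≤ 2 * δ + L := by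
  linarith [(abs_le.mp ha).2, (abs_le.mp hb).1, (abs_le.mp hlip).2]

lemma le_rpow_one_div_of_le_two_mul_add {t γ ν δ L : ℝ} (ht : 0 ≤ t) (hγ : 0 < γ)
    (hν : 0 < ν) (hbound : γ * t ^ ν ≤ 2 * δ + L) (hsmall : L ≤ γ / 2 * t ^ ν) :
    t ≤ (4 * δ / γ) ^ (1 / ν) := by
  have hpow : t ^ ν ≤ 4 * δ / γ := by
    rw [le_div_iff₀ hγ]
    linarith
  rw [one_div, Real.le_rpow_inv_iff_of_pos ht ((Real.rpow_nonneg ht ν).trans hpow) hν]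
  exact hpow

theorem growth_perturbation_estimate_general {E : Type*} [NormedAddCommGroup E]
    (X : Set E) (φε φ : E → E → ℝ) (xh xb : E) (hxh : xh ∈ X) (hxb : xb ∈ X)
    (γ ν δ κ : ℝ) (hγ : 0 < γ) (hν : ν ∈ Set.Ioo (0:ℝ) 1)
    (hgrowth : ∀ x ∈ X, φε x xh ≤ φε xh xh - γ * ‖x - xh‖ ^ ν)
    (hsup : ∀ x ∈ X, |φε x xh - φ x xh| ≤ δ)
    (hlip : |φ xh xh - φ xb xh| ≤ κ * ‖xh - xb‖) :
    γ * ‖xh - xb‖ ^ ν ≤ 2 * δ + κ * ‖xh - xb‖ ∧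
    (κ * ‖xh - xb‖ ≤ γ / 2 * ‖xh - xb‖ ^ ν →
      ‖xh - xb‖ ≤ (4 * δ / γ) ^ (1 / ν)) := by
  have hgrowth_xb : φε xb xh ≤ φε xh xh - γ * ‖xh - xb‖ ^ ν := by
    simpa only [norm_sub_rev xb xh] using hgrowth xb hxb
  have hbound : γ * ‖xh - xb‖ ^ ν ≤ 2 * δ + κ * ‖xh - xb‖ :=
    le_two_mul_add_of_growth (f := (φε · xh)) (g := (φ · xh)) hgrowth_xb
      (hsup xh hxh) (hsup xb hxb) hlip
  exact ⟨hbound, le_rpow_one_div_of_le_two_mul_add (norm_nonneg _) hγ hν.1 hbound⟩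

/-- abstract perturbation estimate under a growth condition:
`γ‖x̂−x̄‖^ν ≤ 2δ + κ‖x̂−x̄‖`, and if moreover `κ‖x̂−x̄‖ ≤ (γ/2)‖x̂−x̄‖^ν` then
`‖x̂−x̄‖ ≤ (4δ/γ)^{1/ν}`. -/
theorem growth_perturbation_estimate {E : Type*} [NormedAddCommGroup E]
    (X : Set E) (φε φ : E → E → ℝ) (xh xb : E) (hxh : xh ∈ X) (hxb : xb ∈ X)
    (γ ν δ κ : ℝ) (hγ : 0 < γ) (hν : ν ∈ Set.Ioo (0:ℝ) 1) (hδ : 0 ≤ δ) (hκ : 0 ≤ κ)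
    (hmaxε : ∀ x ∈ X, φε x xh ≤ φε xh xh)
    (hmax : ∀ x ∈ X, φ x xb ≤ φ xb xb)
    (hgrowth : ∀ x ∈ X, φε x xh ≤ φε xh xh - γ * ‖x - xh‖ ^ ν)
    (hsup : ∀ x ∈ X, |φε x xh - φ x xh| ≤ δ)
    (hlip : |φ xh xh - φ xb xh| ≤ κ * ‖xh - xb‖) :
    γ * ‖xh - xb‖ ^ ν ≤ 2 * δ + κ * ‖xh - xb‖ ∧
    (κ * ‖xh - xb‖ ≤ γ / 2 * ‖xh - xb‖ ^ ν →
      ‖xh - xb‖ ≤ (4 * δ / γ) ^ (1 / ν)) :=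
  growth_perturbation_estimate_general X φε φ xh xb hxh hxb γ ν δ κ hγ hν hgrowth hsup hlip
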